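/- arXiv:1403.3133 — 2 statements merged into one kernel-verified Lean document; each statement's English description precedes it below -/
import Mathlib

section
/- Let u, ω, F : ℝ × ℝ³ → ℝ³ and ψ : ℝ × ℝ³ → ℝ be smooth, with ω = ∇×u. Suppose the vorticity equation ∂ω/∂t − ∇×(u×ω) = ∇×F holds and ψ is advected: ∂ψ/∂t + u·∇ψ = 0. Then the Eulerian conservation law ∂/∂t (ω·∇ψ) + ∇·[(ω·∇ψ) u − F × ∇ψ] = 0 holds. -/
noncomputable section

open scoped BigOperators

abbrev V3 := Fin 3 → ℝ

/-- partial derivative of a scalar field in direction `i` -/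
def pd (f : V3 → ℝ) (i : Fin 3) (x : V3) : ℝ := fderiv ℝ f x (Pi.single i 1)


theorem pd_slice (g : ℝ × V3 → ℝ) (hg : Differentiable ℝ g) (t : ℝ) (x : V3) (i : Fin 3) :
    pd (fun y => g (t, y)) i x = fderiv ℝ g (t, x) (0, Pi.single i 1) := by
  have h1 : HasFDerivAt (fun y : V3 => ((t : ℝ), y)) (ContinuousLinearMap.inr ℝ ℝ V3) x :=
    (hasFDerivAt_const t x).prodMk (hasFDerivAt_id x)
  have h2 : HasFDerivAt (fun y => g (t, y))
      ((fderiv ℝ g (t, x)).comp (ContinuousLinearMap.inr ℝ ℝ V3)) x :=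
    (hg (t, x)).hasFDerivAt.comp x h1
  rw [pd, h2.fderiv]; simp

theorem deriv_slice (g : ℝ × V3 → ℝ) (hg : Differentiable ℝ g) (t : ℝ) (x : V3) :
    deriv (fun s => g (s, x)) t = fderiv ℝ g (t, x) (1, 0) := by
  have h1 : HasDerivAt (fun s : ℝ => (s, x)) ((1 : ℝ), (0 : V3)) t :=
    (hasDerivAt_id t).prodMk (hasDerivAt_const t x)
  exact ((hg (t, x)).hasFDerivAt.comp_hasDerivAt t h1).deriv

theorem pd_add (f g : V3 → ℝ) (i : Fin 3) (x : V3) (hf : DifferentiableAt ℝ f x)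
    (hg : DifferentiableAt ℝ g x) :
    pd (fun y => f y + g y) i x = pd f i x + pd g i x := by
  simp [pd, fderiv_fun_add hf hg]

theorem pd_sub (f g : V3 → ℝ) (i : Fin 3) (x : V3) (hf : DifferentiableAt ℝ f x)
    (hg : DifferentiableAt ℝ g x) :
    pd (fun y => f y - g y) i x = pd f i x - pd g i x := by
  simp [pd, fderiv_fun_sub hf hg]

theorem pd_mul (f g : V3 → ℝ) (i : Fin 3) (x : V3) (hf : DifferentiableAt ℝ f x)
    (hg : DifferentiableAt ℝ g x) :
    pd (fun y => f y * g y) i x = pd f i x * g x + f x * pd g i x := by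
  simp [pd, fderiv_fun_mul hf hg]; ring

theorem pd_const (c : ℝ) (i : Fin 3) (x : V3) : pd (fun _ => c) i x = 0 := by
  simp [pd]

theorem fderiv_swap (g : ℝ × V3 → ℝ) (hg : ContDiff ℝ (⊤ : ℕ∞) g) (p v w : ℝ × V3) :
    fderiv ℝ (fun q => fderiv ℝ g q v) p w = fderiv ℝ (fun q => fderiv ℝ g q w) p v := by
  have hd : DifferentiableAt ℝ (fderiv ℝ g) p :=
    ((hg.fderiv_right (m := 1) (WithTop.coe_le_coe.mpr le_top)).differentiable (by simp)) p
  have e : ∀ z : ℝ × V3, fderiv ℝ (fun q => fderiv ℝ g q z) p =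
      (ContinuousLinearMap.apply ℝ ℝ z).comp (fderiv ℝ (fderiv ℝ g) p) := by
    intro z
    have h : HasFDerivAt (fun q => fderiv ℝ g q z)
        ((ContinuousLinearMap.apply ℝ ℝ z).comp (fderiv ℝ (fderiv ℝ g) p)) p :=
      (ContinuousLinearMap.apply ℝ ℝ z).hasFDerivAt.comp p hd.hasFDerivAt
    exact h.fderiv
  rw [e v, e w]
  simpa using hg.contDiffAt.isSymmSndFDerivAt (by rw [minSmoothness_of_isRCLikeNormedField]; exact WithTop.coe_le_coe.mpr le_top) w v

/-- gradient -/
def grad (f : V3 → ℝ) (x : V3) : V3 := fun i => pd f i x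

/-- divergence -/
def div3 (F : V3 → V3) (x : V3) : ℝ := ∑ i, pd (fun y => F y i) i x

/-- curl -/
def curl3 (F : V3 → V3) (x : V3) : V3 :=
  ![pd (fun y => F y 2) 1 x - pd (fun y => F y 1) 2 x,
    pd (fun y => F y 0) 2 x - pd (fun y => F y 2) 0 x,
    pd (fun y => F y 1) 0 x - pd (fun y => F y 0) 1 x]

/-- cross product in ℝ³ -/
def cross (a b : V3) : V3 :=
  ![a 1 * b 2 - a 2 * b 1, a 2 * b 0 - a 0 * b 2, a 0 * b 1 - a 1 * b 0]

/-- dot product in ℝ³ -/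
def dot (a b : V3) : ℝ := ∑ i, a i * b i

set_option maxHeartbeats 1000000 in
theorem eulerian_potential_vorticity_conservation
    (u ω F : ℝ × V3 → V3) (ψ : ℝ × V3 → ℝ)
    (hu : ContDiff ℝ (⊤ : ℕ∞) u) (hω : ContDiff ℝ (⊤ : ℕ∞) ω) (hF : ContDiff ℝ (⊤ : ℕ∞) F)
    (hψ : ContDiff ℝ (⊤ : ℕ∞) ψ)
    (hωdef : ∀ t x, ω (t, x) = curl3 (fun y => u (t, y)) x)
    (hvort : ∀ t x, (fun i => deriv (fun s => ω (s, x) i) t)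
        - curl3 (fun y => cross (u (t, y)) (ω (t, y))) x
        = curl3 (fun y => F (t, y)) x)
    (hadv : ∀ t x, deriv (fun s => ψ (s, x)) t
        + dot (u (t, x)) (grad (fun y => ψ (t, y)) x) = 0) :
    ∀ t x,
      deriv (fun s => dot (ω (s, x)) (grad (fun y => ψ (s, y)) x)) t
        + div3 (fun y =>
            dot (ω (t, y)) (grad (fun z => ψ (t, z)) y) • u (t, y)
              - cross (F (t, y)) (grad (fun z => ψ (t, z)) y)) x = 0 := by
  intro t x
  have hud : Differentiable ℝ u := hu.differentiable (by simp)
  have hωd : Differentiable ℝ ω := hω.differentiable (by simp)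
  have hFd : Differentiable ℝ F := hF.differentiable (by simp)
  have hψd : Differentiable ℝ ψ := hψ.differentiable (by simp)
  have hDψ : ∀ v : ℝ × V3, Differentiable ℝ (fun p => fderiv ℝ ψ p v) := fun v =>
    ((ContinuousLinearMap.apply ℝ ℝ v).contDiff.comp (hψ.fderiv_right (m := 1) (WithTop.coe_le_coe.mpr le_top))).differentiable (by simp)
  have Pψ : ∀ (t : ℝ) (x : V3) (i : Fin 3), pd (fun y => ψ (t, y)) i x
      = fderiv ℝ ψ (t, x) (0, Pi.single i 1) := fun t x i => pd_slice ψ hψd t x i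
  have Pu : ∀ (j : Fin 3) (t : ℝ) (x : V3) (i : Fin 3), pd (fun y => u (t, y) j) i x
      = fderiv ℝ (fun p => u p j) (t, x) (0, Pi.single i 1) := fun j t x i =>
    pd_slice (fun p => u p j) (by fun_prop) t x i
  have Pω : ∀ (j : Fin 3) (t : ℝ) (x : V3) (i : Fin 3), pd (fun y => ω (t, y) j) i x
      = fderiv ℝ (fun p => ω p j) (t, x) (0, Pi.single i 1) := fun j t x i =>
    pd_slice (fun p => ω p j) (by fun_prop) t x i
  have PF : ∀ (j : Fin 3) (t : ℝ) (x : V3) (i : Fin 3), pd (fun y => F (t, y) j) i x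
      = fderiv ℝ (fun p => F p j) (t, x) (0, Pi.single i 1) := fun j t x i =>
    pd_slice (fun p => F p j) (by fun_prop) t x i
  have PDψ : ∀ (v : ℝ × V3) (t : ℝ) (x : V3) (i : Fin 3),
      pd (fun y => fderiv ℝ ψ (t, y) v) i x
      = fderiv ℝ (fun p => fderiv ℝ ψ p v) (t, x) (0, Pi.single i 1) := fun v t x i =>
    pd_slice _ (hDψ v) t x i
  have Dω : ∀ (j : Fin 3) (t : ℝ) (x : V3), deriv (fun s => ω (s, x) j) t
      = fderiv ℝ (fun p => ω p j) (t, x) (1, 0) := fun j t x =>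
    deriv_slice (fun p => ω p j) (by fun_prop) t x
  have Dψt : ∀ (t : ℝ) (x : V3), deriv (fun s => ψ (s, x)) t
      = fderiv ℝ ψ (t, x) (1, 0) := fun t x => deriv_slice ψ hψd t x
  have DDψ : ∀ (v : ℝ × V3) (t : ℝ) (x : V3), deriv (fun s => fderiv ℝ ψ (s, x) v) t
      = fderiv ℝ (fun p => fderiv ℝ ψ p v) (t, x) (1, 0) := fun v t x =>
    deriv_slice _ (hDψ v) t x
  simp only [dot, grad, div3, cross, Fin.sum_univ_three, Pψ, Pi.sub_apply, Pi.smul_apply,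
    smul_eq_mul, Matrix.cons_val_zero, Matrix.cons_val_one, Matrix.head_cons,
    Matrix.cons_val_two, Matrix.tail_cons]
  simp (disch := fun_prop) only [deriv_fun_add, deriv_fun_mul, pd_sub, pd_add, pd_mul]
  simp only [Dω, DDψ, Pu, Pω, PF, PDψ]
  -- component smoothness of u
  have huj : ∀ j : Fin 3, ContDiff ℝ (⊤ : ℕ∞) (fun p => u p j) := by intro j; fun_prop
  have hDu : ∀ (j : Fin 3) (v : ℝ × V3), Differentiable ℝ (fun p => fderiv ℝ (fun q => u q j) p v) :=
    fun j v => ((ContinuousLinearMap.apply ℝ ℝ v).contDiff.comp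
      ((huj j).fderiv_right (m := 1) (WithTop.coe_le_coe.mpr le_top))).differentiable (by simp)
  have PDu : ∀ (j : Fin 3) (v : ℝ × V3) (t : ℝ) (x : V3) (i : Fin 3),
      pd (fun y => fderiv ℝ (fun q => u q j) (t, y) v) i x
      = fderiv ℝ (fun p => fderiv ℝ (fun q => u q j) p v) (t, x) (0, Pi.single i 1) :=
    fun j v t x i => pd_slice _ (hDu j v) t x i
  -- advection equation differentiated in space
  have hadv' : (fun y => deriv (fun s => ψ (s, y)) t
      + dot (u (t, y)) (grad (fun z => ψ (t, z)) y)) = fun _ : V3 => (0 : ℝ) :=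
    funext fun y => hadv t y
  have ha0 := congrArg (fun f => pd f 0 x) hadv'
  have ha1 := congrArg (fun f => pd f 1 x) hadv'
  have ha2 := congrArg (fun f => pd f 2 x) hadv'
  simp only [dot, grad, Fin.sum_univ_three, Dψt, Pψ] at ha0 ha1 ha2
  simp (disch := fun_prop) only [pd_add, pd_mul, pd_const, Pu, PDψ] at ha0 ha1 ha2
  -- vorticity equation components
  have hv0 := congrFun (hvort t x) 0
  have hv1 := congrFun (hvort t x) 1
  have hv2 := congrFun (hvort t x) 2
  simp only [Pi.sub_apply, curl3, cross, Matrix.cons_val_zero, Matrix.cons_val_one,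
    Matrix.head_cons, Matrix.cons_val_two, Matrix.tail_cons] at hv0 hv1 hv2
  simp (disch := fun_prop) only [pd_sub, pd_mul, Pu, Pω, PF, Dω] at hv0 hv1 hv2
  -- divergence of ω vanishes
  have e0 : (fun y => ω (t, y) 0) = (fun y =>
      fderiv ℝ (fun p => u p 2) (t, y) (0, Pi.single 1 1)
      - fderiv ℝ (fun p => u p 1) (t, y) (0, Pi.single 2 1)) := funext fun y => by
    have h := congrFun (hωdef t y) 0
    simp only [curl3, Matrix.cons_val_zero, Pu] at h
    exact h
  have e1 : (fun y => ω (t, y) 1) = (fun y =>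
      fderiv ℝ (fun p => u p 0) (t, y) (0, Pi.single 2 1)
      - fderiv ℝ (fun p => u p 2) (t, y) (0, Pi.single 0 1)) := funext fun y => by
    have h := congrFun (hωdef t y) 1
    simp only [curl3, Matrix.cons_val_one, Matrix.head_cons, Pu] at h
    exact h
  have e2 : (fun y => ω (t, y) 2) = (fun y =>
      fderiv ℝ (fun p => u p 1) (t, y) (0, Pi.single 0 1)
      - fderiv ℝ (fun p => u p 0) (t, y) (0, Pi.single 1 1)) := funext fun y => by
    have h := congrFun (hωdef t y) 2
    simp only [curl3, Matrix.cons_val_two, Matrix.tail_cons, Matrix.head_cons, Pu] at h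
    exact h
  have w0 := congrArg (fun f => pd f 0 x) e0
  have w1 := congrArg (fun f => pd f 1 x) e1
  have w2 := congrArg (fun f => pd f 2 x) e2
  simp (disch := fun_prop) only [pd_sub, PDu, Pω] at w0 w1 w2
  have swap0 := fderiv_swap (fun p => u p 0) (huj 0) (t, x) (0, Pi.single 2 1) (0, Pi.single 1 1)
  have swap1 := fderiv_swap (fun p => u p 1) (huj 1) (t, x) (0, Pi.single 0 1) (0, Pi.single 2 1)
  have swap2 := fderiv_swap (fun p => u p 2) (huj 2) (t, x) (0, Pi.single 1 1) (0, Pi.single 0 1)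
  have hdivω : fderiv ℝ (fun p => ω p 0) (t, x) (0, Pi.single 0 1)
      + fderiv ℝ (fun p => ω p 1) (t, x) (0, Pi.single 1 1)
      + fderiv ℝ (fun p => ω p 2) (t, x) (0, Pi.single 2 1) = 0 := by
    linear_combination w0 + w1 + w2 + swap0 + swap1 + swap2
  -- symmetry of second derivatives of ψ
  have m0 := fderiv_swap ψ hψ (t, x) (0, Pi.single 0 1) ((1 : ℝ), (0 : V3))
  have m1 := fderiv_swap ψ hψ (t, x) (0, Pi.single 1 1) ((1 : ℝ), (0 : V3))
  have m2 := fderiv_swap ψ hψ (t, x) (0, Pi.single 2 1) ((1 : ℝ), (0 : V3))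
  have s01 := fderiv_swap ψ hψ (t, x) (0, Pi.single 0 1) (0, Pi.single 1 1)
  have s02 := fderiv_swap ψ hψ (t, x) (0, Pi.single 0 1) (0, Pi.single 2 1)
  have s12 := fderiv_swap ψ hψ (t, x) (0, Pi.single 1 1) (0, Pi.single 2 1)
  linear_combination
    fderiv ℝ ψ (t, x) (0, Pi.single 0 1) * hv0
    + fderiv ℝ ψ (t, x) (0, Pi.single 1 1) * hv1
    + fderiv ℝ ψ (t, x) (0, Pi.single 2 1) * hv2
    + ω (t, x) 0 * m0 + ω (t, x) 1 * m1 + ω (t, x) 2 * m2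
    + ω (t, x) 0 * ha0 + ω (t, x) 1 * ha1 + ω (t, x) 2 * ha2
    + (u (t, x) 0 * fderiv ℝ ψ (t, x) (0, Pi.single 0 1)
      + u (t, x) 1 * fderiv ℝ ψ (t, x) (0, Pi.single 1 1)
      + u (t, x) 2 * fderiv ℝ ψ (t, x) (0, Pi.single 2 1)) * hdivω
    + (u (t, x) 1 * ω (t, x) 0 - u (t, x) 0 * ω (t, x) 1 - F (t, x) 2) * s01
    + (u (t, x) 2 * ω (t, x) 0 - u (t, x) 0 * ω (t, x) 2 + F (t, x) 1) * s02
    + (u (t, x) 2 * ω (t, x) 1 - u (t, x) 1 * ω (t, x) 2 - F (t, x) 0) * s12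
end
end

section
/- Let x(x₀,t) be a smooth Lagrangian flow map with positive Jacobian J and velocity u. Suppose I⁰(x₀,t) and I^j(x₀,t) (j=1,2,3) are smooth and satisfy the Lagrangian conservation law ∂I⁰/∂t + ∂I^j/∂x₀^j = 0. Define F⁰ = I⁰/J and F^j = (u^j I⁰ + (∂x^j/∂x₀^k) I^k)/J, viewed as functions of Eulerian variables (x,t) via the flow map. Then the Eulerian conservation law ∂F⁰/∂t + ∂F^j/∂x^j = 0 holds. -/
noncomputable section
open scoped BigOperators
open scoped ContDiff

abbrev W := V3 × ℝ

def Dd (w : W) (f : W → ℝ) : W → ℝ := fun p => fderiv ℝ f p w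

def es (i : Fin 3) : W := (Pi.single i 1, 0)
def et : W := (0, 1)

abbrev Sm (f : W → ℝ) : Prop := ContDiff ℝ ∞ f

theorem Sm.diff {f : W → ℝ} (hf : Sm f) : Differentiable ℝ f :=
  hf.differentiable (by simp)

theorem Dd_smooth {f : W → ℝ} (hf : Sm f) (w : W) : Sm (Dd w f) :=
  ((contDiff_infty_iff_fderiv.mp hf).2).clm_apply contDiff_const

theorem Dd_add {f g : W → ℝ} (hf : Sm f) (hg : Sm g) (w : W) (p : W) :
    Dd w (fun q => f q + g q) p = Dd w f p + Dd w g p := by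
  simp [Dd, fderiv_fun_add (hf.diff p) (hg.diff p)]

theorem Dd_mul {f g : W → ℝ} (hf : Sm f) (hg : Sm g) (w : W) (p : W) :
    Dd w (fun q => f q * g q) p = Dd w f p * g p + f p * Dd w g p := by
  simp [Dd, fderiv_fun_mul (hf.diff p) (hg.diff p)]; ring

theorem Dd_sub {f g : W → ℝ} (hf : Sm f) (hg : Sm g) (w : W) (p : W) :
    Dd w (fun q => f q - g q) p = Dd w f p - Dd w g p := by
  simp [Dd, fderiv_fun_sub (hf.diff p) (hg.diff p)]

theorem Dd_sum {f : Fin 3 → W → ℝ} (hf : ∀ j, Sm (f j)) (w : W) (p : W) :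
    Dd w (fun q => ∑ j, f j q) p = ∑ j, Dd w (f j) p := by
  simp [Dd, fderiv_fun_sum (fun j _ => ((hf j).diff p : DifferentiableAt ℝ (f j) p))]

theorem Dd_clairaut {f : W → ℝ} (hf : Sm f) (w w' : W) (p : W) :
    Dd w (Dd w' f) p = Dd w' (Dd w f) p := by
  have hdf : ContDiff ℝ ∞ (fderiv ℝ f) := (contDiff_infty_iff_fderiv.mp hf).2
  have hf' : ∀ y, HasFDerivAt f (fderiv ℝ f y) y := fun y => (hf.diff y).hasFDerivAt
  have hf'' : HasFDerivAt (fderiv ℝ f) (fderiv ℝ (fderiv ℝ f) p) p :=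
    (hdf.differentiable (by simp) p).hasFDerivAt
  have key : ∀ v v' : W, Dd v (Dd v' f) p = (fderiv ℝ (fderiv ℝ f) p v) v' := by
    intro v v'
    have h2 : HasFDerivAt (fun q => (fderiv ℝ f q) v')
        (((fderiv ℝ (fderiv ℝ f) p).flip v')) p := by
      have := hf''.clm_apply (hasFDerivAt_const v' p)
      refine this.congr_fderiv ?_
      simp
    have h3 := congrArg (fun L => L v) h2.fderiv
    simp only [Dd]
    exact h3
  rw [key w w', key w' w]
  exact (second_derivative_symmetric hf' hf'' w' w).symm

theorem hasFDerivAt_slice_x (t : ℝ) (x₀ : V3) :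
    HasFDerivAt (fun y : V3 => (y, t)) (ContinuousLinearMap.inl ℝ V3 ℝ) x₀ := by
  have h := ((ContinuousLinearMap.inl ℝ V3 ℝ).hasFDerivAt (x := x₀)).add_const ((0 : V3), t)
  have he : (fun y : V3 => (y, t)) =
      fun y => (ContinuousLinearMap.inl ℝ V3 ℝ) y + ((0 : V3), t) := by
    funext y; simp [Prod.ext_iff]
  rw [he]; exact h

theorem pd_slice_s11 {f : W → ℝ} (hf : Differentiable ℝ f) (i : Fin 3) (x₀ : V3) (t : ℝ) :
    pd (fun y => f (y, t)) i x₀ = Dd (es i) f (x₀, t) := by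
  have hc : HasFDerivAt (fun y : V3 => f (y, t))
      ((fderiv ℝ f (x₀, t)).comp (ContinuousLinearMap.inl ℝ V3 ℝ)) x₀ :=
    (hf (x₀, t)).hasFDerivAt.comp x₀ (hasFDerivAt_slice_x t x₀)
  simp [pd, hc.fderiv, Dd, es]

theorem hasDerivAt_slice_t {f : W → ℝ} (hf : Differentiable ℝ f) (x₀ : V3) (t : ℝ) :
    HasDerivAt (fun s => f (x₀, s)) (Dd et f (x₀, t)) t := by
  have h1 : HasFDerivAt (fun s : ℝ => (x₀, s)) (ContinuousLinearMap.inr ℝ V3 ℝ) t := by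
    have h := ((ContinuousLinearMap.inr ℝ V3 ℝ).hasFDerivAt (x := t)).add_const ((x₀ : V3), (0 : ℝ))
    have he : (fun s : ℝ => (x₀, s)) =
        fun s => (ContinuousLinearMap.inr ℝ V3 ℝ) s + ((x₀ : V3), (0 : ℝ)) := by
      funext s; simp [Prod.ext_iff]
    rw [he]; exact h
  have hc : HasFDerivAt (fun s => f (x₀, s))
      ((fderiv ℝ f (x₀, t)).comp (ContinuousLinearMap.inr ℝ V3 ℝ)) t :=
    (hf (x₀, t)).hasFDerivAt.comp t h1
  have := hc.hasDerivAt
  simpa [Dd, et] using this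

theorem deriv_slice_s11 {f : W → ℝ} (hf : Differentiable ℝ f) (x₀ : V3) (t : ℝ) :
    deriv (fun s => f (x₀, s)) t = Dd et f (x₀, t) :=
  (hasDerivAt_slice_t hf x₀ t).deriv

/-- decomposition of a linear functional on W in the basis es, et -/
theorem decomp (L : W →L[ℝ] ℝ) (z : W) :
    L z = (∑ i, z.1 i * L (es i)) + z.2 * L et := by
  have h1 : (∑ i, z.1 i • es i) + z.2 • et = z := by
    rw [Prod.ext_iff]
    constructor
    · show (∑ i, z.1 i • es i).1 + z.2 • et.1 = z.1
      funext j
      simp [es, et, Prod.fst_sum, Finset.sum_apply, Pi.single_apply]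
    · show (∑ i, z.1 i • es i).2 + z.2 • et.2 = z.2
      simp [es, et, Prod.snd_sum]
  calc L z = L ((∑ i, z.1 i • es i) + z.2 • et) := by rw [h1]
  _ = _ := by simp [map_add, map_sum, map_smul]

theorem Dd_comp {Xf : W → V3} (hXf : ContDiff ℝ ∞ Xf) {f : W → ℝ} (hf : Sm f)
    (w p : W) :
    Dd w (fun q => f (Xf q, q.2)) p =
      (∑ i, Dd w (fun q => Xf q i) p * Dd (es i) f (Xf p, p.2))
        + w.2 * Dd et f (Xf p, p.2) := by
  have hXd : DifferentiableAt ℝ Xf p := hXf.differentiable (by simp) p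
  have hcomp : ∀ i, DifferentiableAt ℝ (fun q => Xf q i) p := fun i =>
    ((ContinuousLinearMap.proj i : V3 →L[ℝ] ℝ).differentiableAt).comp p hXd
  have hΦ : HasFDerivAt (fun q : W => (Xf q, q.2))
      ((fderiv ℝ Xf p).prod (ContinuousLinearMap.snd ℝ V3 ℝ)) p :=
    hXd.hasFDerivAt.prodMk hasFDerivAt_snd
  have hfd : DifferentiableAt ℝ f (Xf p, p.2) := hf.diff _
  have hD := (hfd.hasFDerivAt.comp p hΦ).fderiv
  simp only [Function.comp_def] at hD
  have : Dd w (fun q => f (Xf q, q.2)) p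
      = (fderiv ℝ f (Xf p, p.2)) ((fderiv ℝ Xf p) w, w.2) := by
    simp only [Dd, hD]; rfl
  rw [this, decomp]
  congr 1
  · refine Finset.sum_congr rfl fun i _ => ?_
    congr 1
    rw [fderiv_pi hcomp]
    rfl

theorem Dd_mul3 {f g h : W → ℝ} (hf : Sm f) (hg : Sm g) (hh : Sm h) (w p : W) :
    Dd w (fun q => f q * g q * h q) p
      = Dd w f p * g p * h p + f p * Dd w g p * h p + f p * g p * Dd w h p := by
  rw [Dd_mul (hf.mul hg) hh, Dd_mul hf hg]; ring

section FlowDefs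

variable (X : V3 → ℝ → V3)

def fX (i : Fin 3) : W → ℝ := fun p => X p.1 p.2 i
def Mf (i j : Fin 3) : W → ℝ := Dd (es j) (fX X i)
def vf (j : Fin 3) : W → ℝ := Dd et (fX X j)
def detf : W → ℝ := fun p =>
  Mf X 0 0 p * Mf X 1 1 p * Mf X 2 2 p - Mf X 0 0 p * Mf X 1 2 p * Mf X 2 1 p
  - Mf X 0 1 p * Mf X 1 0 p * Mf X 2 2 p + Mf X 0 1 p * Mf X 1 2 p * Mf X 2 0 p
  + Mf X 0 2 p * Mf X 1 0 p * Mf X 2 1 p - Mf X 0 2 p * Mf X 1 1 p * Mf X 2 0 p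

def Nf (k j : Fin 3) (p : W) : ℝ :=
  ![ ![Mf X 1 1 p * Mf X 2 2 p - Mf X 1 2 p * Mf X 2 1 p,
       Mf X 0 2 p * Mf X 2 1 p - Mf X 0 1 p * Mf X 2 2 p,
       Mf X 0 1 p * Mf X 1 2 p - Mf X 0 2 p * Mf X 1 1 p],
     ![Mf X 1 2 p * Mf X 2 0 p - Mf X 1 0 p * Mf X 2 2 p,
       Mf X 0 0 p * Mf X 2 2 p - Mf X 0 2 p * Mf X 2 0 p,
       Mf X 0 2 p * Mf X 1 0 p - Mf X 0 0 p * Mf X 1 2 p],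
     ![Mf X 1 0 p * Mf X 2 1 p - Mf X 1 1 p * Mf X 2 0 p,
       Mf X 0 1 p * Mf X 2 0 p - Mf X 0 0 p * Mf X 2 1 p,
       Mf X 0 0 p * Mf X 1 1 p - Mf X 0 1 p * Mf X 1 0 p] ] k j

variable {X} (hX : ContDiff ℝ ∞ fun p : W => X p.1 p.2)
include hX

theorem Sm_fX (i : Fin 3) : Sm (fX X i) :=
  (ContinuousLinearMap.proj i : V3 →L[ℝ] ℝ).contDiff.comp hX

theorem Sm_Mf (i j : Fin 3) : Sm (Mf X i j) := Dd_smooth (Sm_fX hX i) _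

theorem Sm_vf (j : Fin 3) : Sm (vf X j) := Dd_smooth (Sm_fX hX j) _

theorem Sm_detf : Sm (detf X) := by
  unfold detf
  have h := Sm_Mf hX
  exact (((((((h 0 0).mul (h 1 1)).mul (h 2 2)).sub (((h 0 0).mul (h 1 2)).mul (h 2 1))).sub
    (((h 0 1).mul (h 1 0)).mul (h 2 2))).add (((h 0 1).mul (h 1 2)).mul (h 2 0))).add
    (((h 0 2).mul (h 1 0)).mul (h 2 1))).sub (((h 0 2).mul (h 1 1)).mul (h 2 0))

theorem Sm_Nf (k j : Fin 3) : Sm (Nf X k j) := by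
  have h := Sm_Mf hX
  fin_cases k <;> fin_cases j <;>
    simp only [Nf, Matrix.cons_val_zero, Matrix.cons_val_one, Matrix.head_cons,
      Matrix.cons_val_two, Matrix.tail_cons] <;>
    exact ((h _ _).mul (h _ _)).sub ((h _ _).mul (h _ _))

theorem Mf_sym (a b k : Fin 3) (p : W) :
    Dd (es k) (Mf X a b) p = Dd (es b) (Mf X a k) p :=
  Dd_clairaut (Sm_fX hX a) _ _ p

theorem Mf_t (a b : Fin 3) (p : W) :
    Dd et (Mf X a b) p = Dd (es b) (vf X a) p :=
  Dd_clairaut (Sm_fX hX a) _ _ p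

theorem MN_id (i j : Fin 3) (p : W) :
    ∑ k, Mf X i k p * Nf X k j p = if i = j then detf X p else 0 := by
  fin_cases i <;> fin_cases j <;>
    simp [Fin.sum_univ_three, Nf, detf, Fin.isValue] <;> ring

theorem NM_id (i j : Fin 3) (p : W) :
    ∑ k, Nf X i k p * Mf X k j p = if i = j then detf X p else 0 := by
  fin_cases i <;> fin_cases j <;>
    simp [Fin.sum_univ_three, Nf, detf, Fin.isValue] <;> ring

theorem Jacobi (p : W) :
    Dd et (detf X) p = ∑ k, ∑ j, Nf X k j p * Dd (es k) (vf X j) p := by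
  have h := Sm_Mf hX
  have c1 := ((h 0 0).mul (h 1 1)).mul (h 2 2)
  have c2 := ((h 0 0).mul (h 1 2)).mul (h 2 1)
  have c3 := ((h 0 1).mul (h 1 0)).mul (h 2 2)
  have c4 := ((h 0 1).mul (h 1 2)).mul (h 2 0)
  have c5 := ((h 0 2).mul (h 1 0)).mul (h 2 1)
  have c6 := ((h 0 2).mul (h 1 1)).mul (h 2 0)
  have h3 : ∀ (a b c d e f : Fin 3),
      Dd et (fun q => Mf X a b q * Mf X c d q * Mf X e f q) p
      = Dd (es b) (vf X a) p * Mf X c d p * Mf X e f p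
        + Mf X a b p * Dd (es d) (vf X c) p * Mf X e f p
        + Mf X a b p * Mf X c d p * Dd (es f) (vf X e) p := by
    intro a b c d e f
    rw [Dd_mul ((h a b).mul (h c d)) (h e f), Dd_mul (h a b) (h c d),
        Mf_t hX, Mf_t hX, Mf_t hX]
    ring
  have e1 : Dd et (detf X) p =
      Dd et (fun q => Mf X 0 0 q * Mf X 1 1 q * Mf X 2 2 q) p
      - Dd et (fun q => Mf X 0 0 q * Mf X 1 2 q * Mf X 2 1 q) p
      - Dd et (fun q => Mf X 0 1 q * Mf X 1 0 q * Mf X 2 2 q) p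
      + Dd et (fun q => Mf X 0 1 q * Mf X 1 2 q * Mf X 2 0 q) p
      + Dd et (fun q => Mf X 0 2 q * Mf X 1 0 q * Mf X 2 1 q) p
      - Dd et (fun q => Mf X 0 2 q * Mf X 1 1 q * Mf X 2 0 q) p := by
    unfold detf
    rw [Dd_sub ((((c1.sub c2).sub c3).add c4).add c5) c6,
        Dd_add (((c1.sub c2).sub c3).add c4) c5,
        Dd_add ((c1.sub c2).sub c3) c4,
        Dd_sub (c1.sub c2) c3, Dd_sub c1 c2]
  rw [e1]
  simp only [h3]
  simp [Fin.sum_univ_three, Nf]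
  ring

theorem Piola (j : Fin 3) (p : W) :
    ∑ k, Dd (es k) (Nf X k j) p = 0 := by
  have h := Sm_Mf hX
  have hsub : ∀ (a b c d e f g' h' k : Fin 3),
      Dd (es k) (fun q => Mf X a b q * Mf X c d q - Mf X e f q * Mf X g' h' q) p
      = Dd (es k) (Mf X a b) p * Mf X c d p + Mf X a b p * Dd (es k) (Mf X c d) p
        - (Dd (es k) (Mf X e f) p * Mf X g' h' p
            + Mf X e f p * Dd (es k) (Mf X g' h') p) := by
    intros a b c d e f g' h' k
    rw [Dd_sub ((h _ _).mul (h _ _)) ((h _ _).mul (h _ _)),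
        Dd_mul (h a b) (h c d), Dd_mul (h e f) (h g' h')]
  have hS := Mf_sym hX
  fin_cases j <;> beta_reduce <;> simp only [Fin.zero_eta, Fin.mk_one, Fin.reduceFinMk]
  · rw [Fin.sum_univ_three,
      show Nf X 0 0 = fun q => Mf X 1 1 q * Mf X 2 2 q - Mf X 1 2 q * Mf X 2 1 q from rfl,
      show Nf X 1 0 = fun q => Mf X 1 2 q * Mf X 2 0 q - Mf X 1 0 q * Mf X 2 2 q from rfl,
      show Nf X 2 0 = fun q => Mf X 1 0 q * Mf X 2 1 q - Mf X 1 1 q * Mf X 2 0 q from rfl,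
      hsub, hsub, hsub]
    linear_combination (Mf X 2 2 p) * hS 1 1 0 p + Mf X 1 1 p * hS 2 2 0 p
      - Mf X 2 1 p * hS 1 2 0 p - Mf X 1 2 p * hS 2 1 0 p
      + Mf X 2 0 p * hS 1 2 1 p - Mf X 1 0 p * hS 2 2 1 p
  · rw [Fin.sum_univ_three,
      show Nf X 0 1 = fun q => Mf X 0 2 q * Mf X 2 1 q - Mf X 0 1 q * Mf X 2 2 q from rfl,
      show Nf X 1 1 = fun q => Mf X 0 0 q * Mf X 2 2 q - Mf X 0 2 q * Mf X 2 0 q from rfl,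
      show Nf X 2 1 = fun q => Mf X 0 1 q * Mf X 2 0 q - Mf X 0 0 q * Mf X 2 1 q from rfl,
      hsub, hsub, hsub]
    linear_combination (Mf X 2 1 p) * hS 0 2 0 p + Mf X 0 2 p * hS 2 1 0 p
      - Mf X 2 2 p * hS 0 1 0 p - Mf X 0 1 p * hS 2 2 0 p
      + Mf X 0 0 p * hS 2 2 1 p - Mf X 2 0 p * hS 0 2 1 p
  · rw [Fin.sum_univ_three,
      show Nf X 0 2 = fun q => Mf X 0 1 q * Mf X 1 2 q - Mf X 0 2 q * Mf X 1 1 q from rfl,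
      show Nf X 1 2 = fun q => Mf X 0 2 q * Mf X 1 0 q - Mf X 0 0 q * Mf X 1 2 q from rfl,
      show Nf X 2 2 = fun q => Mf X 0 0 q * Mf X 1 1 q - Mf X 0 1 q * Mf X 1 0 q from rfl,
      hsub, hsub, hsub]
    linear_combination (Mf X 1 2 p) * hS 0 1 0 p + Mf X 0 1 p * hS 1 2 0 p
      - Mf X 1 1 p * hS 0 2 0 p - Mf X 0 2 p * hS 1 1 0 p
      + Mf X 1 0 p * hS 0 2 1 p - Mf X 0 0 p * hS 1 2 1 p

end FlowDefs

theorem lagrangian_to_eulerian_conservation (X : V3 → ℝ → V3) (u : V3 → ℝ → V3)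
    (I0 : V3 → ℝ → ℝ) (Iv : V3 → ℝ → V3)
    (F0 : V3 → ℝ → ℝ) (Fv : V3 → ℝ → V3) (J : V3 → ℝ → ℝ)
    (hX : ContDiff ℝ (⊤ : ℕ∞) fun p : V3 × ℝ => X p.1 p.2)
    (hu : ContDiff ℝ (⊤ : ℕ∞) fun p : V3 × ℝ => u p.1 p.2)
    (hI0 : ContDiff ℝ (⊤ : ℕ∞) fun p : V3 × ℝ => I0 p.1 p.2)
    (hIv : ContDiff ℝ (⊤ : ℕ∞) fun p : V3 × ℝ => Iv p.1 p.2)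
    (hF0 : ContDiff ℝ (⊤ : ℕ∞) fun p : V3 × ℝ => F0 p.1 p.2)
    (hFv : ContDiff ℝ (⊤ : ℕ∞) fun p : V3 × ℝ => Fv p.1 p.2)
    (hbij : ∀ t, Function.Bijective fun x₀ => X x₀ t)
    (hJ : ∀ x₀ t, J x₀ t = (Matrix.of fun i j => pd (fun y => X y t i) j x₀).det)
    (hJpos : ∀ x₀ t, 0 < J x₀ t)
    (hflow : ∀ x₀ t, deriv (fun s => X x₀ s) t = u (X x₀ t) t)
    (hlag : ∀ x₀ t, deriv (fun s => I0 x₀ s) t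
        + ∑ j, pd (fun y => Iv y t j) j x₀ = 0)
    (hF0def : ∀ x₀ t, F0 (X x₀ t) t = I0 x₀ t / J x₀ t)
    (hFvdef : ∀ x₀ t j, Fv (X x₀ t) t j
        = (u (X x₀ t) t j * I0 x₀ t
            + ∑ k, pd (fun y => X y t j) k x₀ * Iv x₀ t k) / J x₀ t) :
    ∀ x t, deriv (fun s => F0 x s) t + div3 (fun y => Fv y t) x = 0 := by
  have hX' : ContDiff ℝ ∞ fun p : W => X p.1 p.2 := hX.of_le (by simp)
  have hu' : ContDiff ℝ ∞ fun p : W => u p.1 p.2 := hu.of_le (by simp)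
  have hI0' : Sm fun p : W => I0 p.1 p.2 := hI0.of_le (by simp)
  have hIv' : ContDiff ℝ ∞ fun p : W => Iv p.1 p.2 := hIv.of_le (by simp)
  have hF0' : Sm fun p : W => F0 p.1 p.2 := hF0.of_le (by simp)
  have hFv' : ContDiff ℝ ∞ fun p : W => Fv p.1 p.2 := hFv.of_le (by simp)
  have SmIv : ∀ j : Fin 3, Sm (fun q : W => Iv q.1 q.2 j) := fun j =>
    (ContinuousLinearMap.proj j : V3 →L[ℝ] ℝ).contDiff.comp hIv'
  have SmFv : ∀ j : Fin 3, Sm (fun q : W => Fv q.1 q.2 j) := fun j =>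
    (ContinuousLinearMap.proj j : V3 →L[ℝ] ℝ).contDiff.comp hFv'
  have SmF0c : Sm (fun q : W => F0 (X q.1 q.2) q.2) :=
    hF0'.comp (hX'.prodMk contDiff_snd)
  have SmFvc : ∀ j : Fin 3, Sm (fun q : W => Fv (X q.1 q.2) q.2 j) := fun j =>
    (SmFv j).comp (hX'.prodMk contDiff_snd)
  have hpdX : ∀ (i j : Fin 3) (x₀ : V3) (t₀ : ℝ),
      pd (fun y => X y t₀ i) j x₀ = Mf X i j (x₀, t₀) := fun i j x₀ t₀ =>
    pd_slice_s11 (f := fun q : W => X q.1 q.2 i) ((Sm_fX hX' i).diff) j x₀ t₀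
  have hJD : ∀ q : W, J q.1 q.2 = detf X q := by
    intro q
    rw [hJ, Matrix.det_fin_three]
    simp only [Matrix.of_apply, hpdX, Prod.mk.eta]
    unfold detf
    ring
  have hdet_pos : ∀ q : W, 0 < detf X q := by
    intro q; have := hJpos q.1 q.2; rwa [hJD q] at this
  have hdet_ne : ∀ q : W, detf X q ≠ 0 := fun q => (hdet_pos q).ne'
  have hvfu : ∀ (q : W) (j : Fin 3), vf X j q = u (X q.1 q.2) q.2 j := by
    intro q j
    have hd : ∀ i : Fin 3, HasDerivAt (fun s => X q.1 s i) (vf X i q) q.2 := fun i =>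
      hasDerivAt_slice_t (f := fun r : W => X r.1 r.2 i) ((Sm_fX hX' i).diff) q.1 q.2
    have hD : HasDerivAt (fun s => X q.1 s) (fun i => vf X i q) q.2 := hasDerivAt_pi.mpr hd
    have h2 := hD.deriv
    rw [hflow q.1 q.2] at h2
    exact (congrFun h2 j).symm
  have hE1 : ∀ q : W, I0 q.1 q.2 = detf X q * F0 (X q.1 q.2) q.2 := by
    intro q
    have h := hF0def q.1 q.2
    rw [hJD q, eq_div_iff (hdet_ne q)] at h
    linear_combination -h
  have hFvD : ∀ (q : W) (j : Fin 3), detf X q * Fv (X q.1 q.2) q.2 j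
      = vf X j q * I0 q.1 q.2 + ∑ k, Mf X j k q * Iv q.1 q.2 k := by
    intro q j
    have h := hFvdef q.1 q.2 j
    rw [hJD q, eq_div_iff (hdet_ne q)] at h
    simp only [hpdX, Prod.mk.eta] at h
    rw [← hvfu q j] at h
    linear_combination h
  have fI0fun : (fun q : W => I0 q.1 q.2)
      = fun q => detf X q * F0 (X q.1 q.2) q.2 := funext hE1
  have fIvfun : ∀ l : Fin 3, (fun q : W => Iv q.1 q.2 l)
      = fun q => ∑ j, Nf X l j q
          * (Fv (X q.1 q.2) q.2 j - vf X j q * F0 (X q.1 q.2) q.2) := by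
    intro l
    funext q
    show Iv q.1 q.2 l = _
    apply mul_left_cancel₀ (hdet_ne q)
    have h0 := hFvD q 0
    have h1 := hFvD q 1
    have h2 := hFvD q 2
    have e1 := hE1 q
    have n0 : ∀ j : Fin 3, ∑ k, Nf X l k q * Mf X k j q = if l = j then detf X q else 0 :=
      fun j => NM_id hX' l j q
    fin_cases l <;>
      [(have m0 := n0 0; have m1 := n0 1; have m2 := n0 2);
       (have m0 := n0 0; have m1 := n0 1; have m2 := n0 2);
       (have m0 := n0 0; have m1 := n0 1; have m2 := n0 2)] <;>
    beta_reduce <;>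
    simp only [Fin.zero_eta, Fin.mk_one, Fin.reduceFinMk] at * <;>
    simp only [Fin.sum_univ_three] at h0 h1 h2 m0 m1 m2 ⊢ <;>
    simp only [Fin.reduceEq, if_true, if_false, reduceIte] at m0 m1 m2
    · linear_combination (-(Nf X 0 0 q)) * h0 - Nf X 0 1 q * h1 - Nf X 0 2 q * h2
        - Iv q.1 q.2 0 * m0 - Iv q.1 q.2 1 * m1 - Iv q.1 q.2 2 * m2
        - (Nf X 0 0 q * vf X 0 q + Nf X 0 1 q * vf X 1 q + Nf X 0 2 q * vf X 2 q) * e1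
    · linear_combination (-(Nf X 1 0 q)) * h0 - Nf X 1 1 q * h1 - Nf X 1 2 q * h2
        - Iv q.1 q.2 0 * m0 - Iv q.1 q.2 1 * m1 - Iv q.1 q.2 2 * m2
        - (Nf X 1 0 q * vf X 0 q + Nf X 1 1 q * vf X 1 q + Nf X 1 2 q * vf X 2 q) * e1
    · linear_combination (-(Nf X 2 0 q)) * h0 - Nf X 2 1 q * h1 - Nf X 2 2 q * h2
        - Iv q.1 q.2 0 * m0 - Iv q.1 q.2 1 * m1 - Iv q.1 q.2 2 * m2
        - (Nf X 2 0 q * vf X 0 q + Nf X 2 1 q * vf X 1 q + Nf X 2 2 q * vf X 2 q) * e1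
  have hlagD : ∀ p : W, Dd et (fun q : W => I0 q.1 q.2) p
      + ∑ j, Dd (es j) (fun q : W => Iv q.1 q.2 j) p = 0 := by
    intro p
    have h := hlag p.1 p.2
    have e1 : deriv (fun s => I0 p.1 s) p.2 = Dd et (fun q : W => I0 q.1 q.2) p :=
      deriv_slice_s11 (f := fun q : W => I0 q.1 q.2) hI0'.diff p.1 p.2
    have e2 : (∑ j, pd (fun y => Iv y p.2 j) j p.1)
        = ∑ j, Dd (es j) (fun q : W => Iv q.1 q.2 j) p :=
      Finset.sum_congr rfl fun j _ =>
        pd_slice_s11 (f := fun q : W => Iv q.1 q.2 j) ((SmIv j).diff) j p.1 p.2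
    rw [e1, e2] at h
    exact h
  have master : ∀ p : W,
      Dd et (fun q : W => F0 q.1 q.2) (X p.1 p.2, p.2)
        + ∑ i, Dd (es i) (fun q : W => Fv q.1 q.2 i) (X p.1 p.2, p.2) = 0 := by
    intro p
    have hP : ∀ m : Fin 3, Sm (fun x : W =>
        Fv (X x.1 x.2) x.2 m - vf X m x * F0 (X x.1 x.2) x.2) := fun m =>
      (SmFvc m).sub ((Sm_vf hX' m).mul SmF0c)
    have hCT0 : Dd et (fun q : W => F0 (X q.1 q.2) q.2) p
        = (vf X 0 p * (Dd (es 0) (fun q : W => F0 q.1 q.2) (X p.1 p.2, p.2)) + vf X 1 p * (Dd (es 1) (fun q : W => F0 q.1 q.2) (X p.1 p.2, p.2)) + vf X 2 p * (Dd (es 2) (fun q : W => F0 q.1 q.2) (X p.1 p.2, p.2))) + Dd et (fun q : W => F0 q.1 q.2) (X p.1 p.2, p.2) := by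
      have h := Dd_comp (Xf := fun q : W => X q.1 q.2) hX' hF0' et p
      simp only [Fin.sum_univ_three] at h
      simp [es, et] at h
      exact h
    have hCF0 : ∀ k : Fin 3, Dd (es k) (fun q : W => F0 (X q.1 q.2) q.2) p
        = Mf X 0 k p * (Dd (es 0) (fun q : W => F0 q.1 q.2) (X p.1 p.2, p.2)) + Mf X 1 k p * (Dd (es 1) (fun q : W => F0 q.1 q.2) (X p.1 p.2, p.2)) + Mf X 2 k p * (Dd (es 2) (fun q : W => F0 q.1 q.2) (X p.1 p.2, p.2)) := by
      intro k
      have h := Dd_comp (Xf := fun q : W => X q.1 q.2) hX' hF0' (es k) p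
      simp only [Fin.sum_univ_three] at h
      simp [es, et] at h
      exact h
    have hCFv : ∀ (j k : Fin 3), Dd (es k) (fun q : W => Fv (X q.1 q.2) q.2 j) p
        = Mf X 0 k p * (Dd (es 0) (fun q : W => Fv q.1 q.2 j) (X p.1 p.2, p.2))
          + Mf X 1 k p * (Dd (es 1) (fun q : W => Fv q.1 q.2 j) (X p.1 p.2, p.2))
          + Mf X 2 k p * (Dd (es 2) (fun q : W => Fv q.1 q.2 j) (X p.1 p.2, p.2)) := by
      intro j k
      have h := Dd_comp (Xf := fun q : W => X q.1 q.2) hX' (SmFv j) (es k) p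
      simp only [Fin.sum_univ_three] at h
      simp [es, et] at h
      exact h
    have hE3 := hlagD p
    simp only [fI0fun, fIvfun, Fin.sum_univ_three] at hE3
    simp only [Dd_mul (Sm_detf hX') SmF0c,
      Dd_add (((Sm_Nf hX' 0 0).mul (hP 0)).add ((Sm_Nf hX' 0 1).mul (hP 1))) ((Sm_Nf hX' 0 2).mul (hP 2)),
      Dd_add ((Sm_Nf hX' 0 0).mul (hP 0)) ((Sm_Nf hX' 0 1).mul (hP 1)),
      Dd_add (((Sm_Nf hX' 1 0).mul (hP 0)).add ((Sm_Nf hX' 1 1).mul (hP 1))) ((Sm_Nf hX' 1 2).mul (hP 2)),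
      Dd_add ((Sm_Nf hX' 1 0).mul (hP 0)) ((Sm_Nf hX' 1 1).mul (hP 1)),
      Dd_add (((Sm_Nf hX' 2 0).mul (hP 0)).add ((Sm_Nf hX' 2 1).mul (hP 1))) ((Sm_Nf hX' 2 2).mul (hP 2)),
      Dd_add ((Sm_Nf hX' 2 0).mul (hP 0)) ((Sm_Nf hX' 2 1).mul (hP 1)),
      Dd_mul (Sm_Nf hX' 0 0) (hP 0),
      Dd_mul (Sm_Nf hX' 0 1) (hP 1),
      Dd_mul (Sm_Nf hX' 0 2) (hP 2),
      Dd_mul (Sm_Nf hX' 1 0) (hP 0),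
      Dd_mul (Sm_Nf hX' 1 1) (hP 1),
      Dd_mul (Sm_Nf hX' 1 2) (hP 2),
      Dd_mul (Sm_Nf hX' 2 0) (hP 0),
      Dd_mul (Sm_Nf hX' 2 1) (hP 1),
      Dd_mul (Sm_Nf hX' 2 2) (hP 2),
      Dd_sub (SmFvc 0) ((Sm_vf hX' 0).mul SmF0c),
      Dd_mul (Sm_vf hX' 0) SmF0c,
      Dd_sub (SmFvc 1) ((Sm_vf hX' 1).mul SmF0c),
      Dd_mul (Sm_vf hX' 1) SmF0c,
      Dd_sub (SmFvc 2) ((Sm_vf hX' 2).mul SmF0c),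
      Dd_mul (Sm_vf hX' 2) SmF0c,
      hCT0, hCF0, hCFv] at hE3
    have hJac := Jacobi hX' p
    have hP0 := Piola hX' 0 p
    have hP1 := Piola hX' 1 p
    have hP2 := Piola hX' 2 p
    simp only [Fin.sum_univ_three] at hJac hP0 hP1 hP2
    have mn00 : Mf X 0 0 p * Nf X 0 0 p + Mf X 0 1 p * Nf X 1 0 p + Mf X 0 2 p * Nf X 2 0 p = detf X p := by
      have h := MN_id hX' 0 0 p
      rw [Fin.sum_univ_three] at h
      rw [if_pos rfl] at h
      exact h
    have mn01 : Mf X 0 0 p * Nf X 0 1 p + Mf X 0 1 p * Nf X 1 1 p + Mf X 0 2 p * Nf X 2 1 p = 0 := by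
      have h := MN_id hX' 0 1 p
      rw [Fin.sum_univ_three] at h
      rw [if_neg (by decide)] at h
      exact h
    have mn02 : Mf X 0 0 p * Nf X 0 2 p + Mf X 0 1 p * Nf X 1 2 p + Mf X 0 2 p * Nf X 2 2 p = 0 := by
      have h := MN_id hX' 0 2 p
      rw [Fin.sum_univ_three] at h
      rw [if_neg (by decide)] at h
      exact h
    have mn10 : Mf X 1 0 p * Nf X 0 0 p + Mf X 1 1 p * Nf X 1 0 p + Mf X 1 2 p * Nf X 2 0 p = 0 := by
      have h := MN_id hX' 1 0 p
      rw [Fin.sum_univ_three] at h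
      rw [if_neg (by decide)] at h
      exact h
    have mn11 : Mf X 1 0 p * Nf X 0 1 p + Mf X 1 1 p * Nf X 1 1 p + Mf X 1 2 p * Nf X 2 1 p = detf X p := by
      have h := MN_id hX' 1 1 p
      rw [Fin.sum_univ_three] at h
      rw [if_pos rfl] at h
      exact h
    have mn12 : Mf X 1 0 p * Nf X 0 2 p + Mf X 1 1 p * Nf X 1 2 p + Mf X 1 2 p * Nf X 2 2 p = 0 := by
      have h := MN_id hX' 1 2 p
      rw [Fin.sum_univ_three] at h
      rw [if_neg (by decide)] at h
      exact h
    have mn20 : Mf X 2 0 p * Nf X 0 0 p + Mf X 2 1 p * Nf X 1 0 p + Mf X 2 2 p * Nf X 2 0 p = 0 := by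
      have h := MN_id hX' 2 0 p
      rw [Fin.sum_univ_three] at h
      rw [if_neg (by decide)] at h
      exact h
    have mn21 : Mf X 2 0 p * Nf X 0 1 p + Mf X 2 1 p * Nf X 1 1 p + Mf X 2 2 p * Nf X 2 1 p = 0 := by
      have h := MN_id hX' 2 1 p
      rw [Fin.sum_univ_three] at h
      rw [if_neg (by decide)] at h
      exact h
    have mn22 : Mf X 2 0 p * Nf X 0 2 p + Mf X 2 1 p * Nf X 1 2 p + Mf X 2 2 p * Nf X 2 2 p = detf X p := by
      have h := MN_id hX' 2 2 p
      rw [Fin.sum_univ_three] at h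
      rw [if_pos rfl] at h
      exact h
    have hG : detf X p * (Dd et (fun q : W => F0 q.1 q.2) (X p.1 p.2, p.2)
        + (Dd (es 0) (fun q : W => Fv q.1 q.2 0) (X p.1 p.2, p.2) + Dd (es 1) (fun q : W => Fv q.1 q.2 1) (X p.1 p.2, p.2) + Dd (es 2) (fun q : W => Fv q.1 q.2 2) (X p.1 p.2, p.2))) = 0 := by
      linear_combination hE3 - (F0 (X p.1 p.2) p.2) * hJac
      - (Fv (X p.1 p.2) p.2 0 - vf X 0 p * (F0 (X p.1 p.2) p.2)) * hP0
      - (Fv (X p.1 p.2) p.2 1 - vf X 1 p * (F0 (X p.1 p.2) p.2)) * hP1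
      - (Fv (X p.1 p.2) p.2 2 - vf X 2 p * (F0 (X p.1 p.2) p.2)) * hP2
      + (vf X 0 p * (Dd (es 0) (fun q : W => F0 q.1 q.2) (X p.1 p.2, p.2)) - (Dd (es 0) (fun q : W => Fv q.1 q.2 0) (X p.1 p.2, p.2))) * mn00
      + (vf X 1 p * (Dd (es 0) (fun q : W => F0 q.1 q.2) (X p.1 p.2, p.2)) - (Dd (es 0) (fun q : W => Fv q.1 q.2 1) (X p.1 p.2, p.2))) * mn01
      + (vf X 2 p * (Dd (es 0) (fun q : W => F0 q.1 q.2) (X p.1 p.2, p.2)) - (Dd (es 0) (fun q : W => Fv q.1 q.2 2) (X p.1 p.2, p.2))) * mn02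
      + (vf X 0 p * (Dd (es 1) (fun q : W => F0 q.1 q.2) (X p.1 p.2, p.2)) - (Dd (es 1) (fun q : W => Fv q.1 q.2 0) (X p.1 p.2, p.2))) * mn10
      + (vf X 1 p * (Dd (es 1) (fun q : W => F0 q.1 q.2) (X p.1 p.2, p.2)) - (Dd (es 1) (fun q : W => Fv q.1 q.2 1) (X p.1 p.2, p.2))) * mn11
      + (vf X 2 p * (Dd (es 1) (fun q : W => F0 q.1 q.2) (X p.1 p.2, p.2)) - (Dd (es 1) (fun q : W => Fv q.1 q.2 2) (X p.1 p.2, p.2))) * mn12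
      + (vf X 0 p * (Dd (es 2) (fun q : W => F0 q.1 q.2) (X p.1 p.2, p.2)) - (Dd (es 2) (fun q : W => Fv q.1 q.2 0) (X p.1 p.2, p.2))) * mn20
      + (vf X 1 p * (Dd (es 2) (fun q : W => F0 q.1 q.2) (X p.1 p.2, p.2)) - (Dd (es 2) (fun q : W => Fv q.1 q.2 1) (X p.1 p.2, p.2))) * mn21
      + (vf X 2 p * (Dd (es 2) (fun q : W => F0 q.1 q.2) (X p.1 p.2, p.2)) - (Dd (es 2) (fun q : W => Fv q.1 q.2 2) (X p.1 p.2, p.2))) * mn22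
    have := mul_eq_zero.mp hG
    rcases this with h | h
    · exact absurd h (hdet_ne p)
    · rw [Fin.sum_univ_three]
      exact h
  intro x t
  obtain ⟨x₀, hx₀⟩ := (hbij t).2 x
  have hx₀' : X x₀ t = x := hx₀
  have g1 : deriv (fun s => F0 x s) t = Dd et (fun q : W => F0 q.1 q.2) (x, t) :=
    deriv_slice_s11 (f := fun q : W => F0 q.1 q.2) hF0'.diff x t
  have g2 : div3 (fun y => Fv y t) x
      = ∑ i, Dd (es i) (fun q : W => Fv q.1 q.2 i) (x, t) :=
    Finset.sum_congr rfl fun i _ =>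
      pd_slice_s11 (f := fun q : W => Fv q.1 q.2 i) ((SmFv i).diff) i x t
  rw [g1, g2, ← hx₀']
  exact master (x₀, t)
end
end
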